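/- Suppose ρ > 1, H is a horocycle in DL(n,n), and p, q are two points of DL(n,n) with p ∈ Sh(H,ρ) and q ∉ Sh(H,ρ). Then any path connecting p to q passes within distance ρ of H. -/

import Mathlib

open Set
open scoped ENNReal

noncomputable section

/-- A vertex of the regular tree with `m` downward branches (valence `m+1`), equipped
with a Busemann height function for a chosen end: the vertex at height `ht` is recorded
by its digits below the chosen end, which are eventually `0` upward and vanish below
the height of the vertex. -/
structure TreeVtx (m : ℕ) where
  ht : ℤ
  dig : ℤ → ℕ
  dig_lt : ∀ i, dig i < m
  dig_lo : ∀ i, i < ht → dig i = 0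
  dig_hi : ∃ N : ℤ, ∀ i, N ≤ i → dig i = 0

namespace DLGeo

/-- Adjacency in the regular tree. -/
def treeAdj {m : ℕ} (u v : TreeVtx m) : Prop :=
  (v.ht = u.ht + 1 ∧ ∀ i, v.ht ≤ i → v.dig i = u.dig i) ∨
  (u.ht = v.ht + 1 ∧ ∀ i, u.ht ≤ i → u.dig i = v.dig i)

/-- `u` is an ancestor of `v` (lies on the upward vertical ray from `v`). -/
def ancestor {m : ℕ} (u v : TreeVtx m) : Prop :=
  v.ht ≤ u.ht ∧ ∀ i, u.ht ≤ i → u.dig i = v.dig i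

/-- A vertex of the Diestel–Leader graph `DL(m,n)`: a pair of tree vertices with
opposite Busemann heights. -/
structure DLVtx (m n : ℕ) where
  a : TreeVtx m
  b : TreeVtx n
  bal : a.ht + b.ht = 0

/-- Adjacency in `DL(m,n)`: simultaneous adjacency in both tree coordinates. -/
def dlAdj {m n : ℕ} (u v : DLVtx m n) : Prop := treeAdj u.a v.a ∧ treeAdj u.b v.b

/-- The height function on `DL(m,n)`. -/
def dlHeight {m n : ℕ} (u : DLVtx m n) : ℤ := u.a.ht

/-- A walk of length `k` from `u` to `v` in a graph. -/
def IsWalk {V : Type*} (adj : V → V → Prop) (k : ℕ) (w : ℕ → V) (u v : V) : Prop :=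
  w 0 = u ∧ w k = v ∧ ∀ i, i < k → adj (w i) (w (i + 1))

/-- The graph metric (with unit edge lengths), valued in `ℝ≥0∞`. -/
def gdist {V : Type*} (adj : V → V → Prop) (u v : V) : ℝ≥0∞ :=
  sInf {c : ℝ≥0∞ | ∃ (k : ℕ) (w : ℕ → V), c = (k : ℝ≥0∞) ∧ IsWalk adj k w u v}

/-- `p` lies below `q` on a vertical geodesic of `DL(m,n)`. -/
def dlBelow {m n : ℕ} (p q : DLVtx m n) : Prop := ancestor q.a p.a ∧ ancestor p.b q.b

/-- The `y`-horocycle of `DL(m,n)` determined by the first tree coordinate `v₀`. -/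
def yHoro {m n : ℕ} (v₀ : TreeVtx m) : Set (DLVtx m n) := {u | u.a = v₀}

/-- The `ρ`-shadow of a subset of a `y`-horocycle: the union of the downward vertical
geodesic rays starting within distance `ρ` of it. -/
def dlShadow {m n : ℕ} (ρ : ℝ) (H : Set (DLVtx m n)) : Set (DLVtx m n) :=
  {p | ∃ q : DLVtx m n, (∃ h ∈ H, gdist dlAdj q h ≤ ENNReal.ofReal ρ) ∧ dlBelow p q}

end DLGeo

open DLGeo

/-! The shadow of a `y`-horocycle `{u | u.a = v₀}` is determined by first coordinates: `p` lies
in it iff some ancestor of `p.a` is `ρ`-close to `v₀`, because any walk in the first tree lifts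
to `DL` from any starting point. Hence the shadow is closed under going down, and it can only
be left upward from a vertex `x` whose own first coordinate is such an ancestor, i.e. from a
vertex `ρ`-close to the horocycle. A walk from inside to outside must take such a step. -/

namespace TreeVtx

variable {m : ℕ}

theorem zero_lt (v : TreeVtx m) : 0 < m :=
  (Nat.zero_le _).trans_lt (v.dig_lt 0)

theorem ext {u v : TreeVtx m} (hht : u.ht = v.ht) (hdig : ∀ i, u.dig i = v.dig i) : u = v := by
  cases u
  cases v
  cases hht
  cases funext hdig
  rfl

def parent (v : TreeVtx m) : TreeVtx m where
  ht := v.ht + 1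
  dig i := if v.ht + 1 ≤ i then v.dig i else 0
  dig_lt i := by
    split
    · exact v.dig_lt i
    · exact v.zero_lt
  dig_lo i hi := if_neg (by omega)
  dig_hi := by
    obtain ⟨N, hN⟩ := v.dig_hi
    exact ⟨N, fun i hi => by simp only [hN i hi, ite_self]⟩

/-- The descendant of `v` at height `t` reached by always following the `0`-th branch. -/
def descendant (v : TreeVtx m) (t : ℤ) (ht : t ≤ v.ht) : TreeVtx m where
  ht := t
  dig := v.dig
  dig_lt := v.dig_lt
  dig_lo i hi := v.dig_lo i (by omega)
  dig_hi := v.dig_hi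

end TreeVtx

namespace DLGeo

section Tree

variable {m : ℕ} {u v w : TreeVtx m}

theorem treeAdj_iff :
    treeAdj u v ↔ (v.ht = u.ht + 1 ∧ ancestor v u) ∨ (u.ht = v.ht + 1 ∧ ancestor u v) := by
  unfold treeAdj ancestor
  constructor
  · rintro (⟨hv, hdig⟩ | ⟨hu, hdig⟩)
    · exact .inl ⟨hv, by omega, hdig⟩
    · exact .inr ⟨hu, by omega, hdig⟩
  · rintro (⟨hv, -, hdig⟩ | ⟨hu, -, hdig⟩)
    · exact .inl ⟨hv, hdig⟩
    · exact .inr ⟨hu, hdig⟩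

theorem treeAdj_parent (v : TreeVtx m) : treeAdj v v.parent :=
  .inl ⟨rfl, fun _ hi => if_pos hi⟩

theorem treeAdj_descendant_sub_one (v : TreeVtx m) :
    treeAdj v (v.descendant (v.ht - 1) (by omega)) :=
  .inr ⟨by simp [TreeVtx.descendant], fun _ _ => rfl⟩

theorem ancestor_descendant (v : TreeVtx m) (t : ℤ) (ht : t ≤ v.ht) :
    ancestor v (v.descendant t ht) :=
  ⟨ht, fun _ _ => rfl⟩

theorem ancestor_trans (huv : ancestor u v) (hvw : ancestor v w) : ancestor u w :=
  ⟨hvw.1.trans huv.1, fun i hi => (huv.2 i hi).trans (hvw.2 i (huv.1.trans hi))⟩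

theorem eq_of_ancestor_of_ht_le (huv : ancestor u v) (hle : u.ht ≤ v.ht) : u = v := by
  refine TreeVtx.ext (le_antisymm hle huv.1) fun i => ?_
  rcases le_or_gt u.ht i with hi | hi
  · exact huv.2 i hi
  · rw [u.dig_lo i hi, v.dig_lo i (by have := huv.1; omega)]

/-- The ancestors of a vertex form a ray, ordered by height. -/
theorem ancestor_of_ancestor_of_ht_le (huw : ancestor u w) (hvw : ancestor v w)
    (hle : v.ht ≤ u.ht) : ancestor u v :=
  ⟨hle, fun i hi => (huw.2 i hi).trans (hvw.2 i (hle.trans hi)).symm⟩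

end Tree

section Walks

variable {V V' : Type*} {adj : V → V → Prop} {k : ℕ} {w : ℕ → V} {u v x : V}

theorem IsWalk.map {adj' : V' → V' → Prop} (f : V → V')
    (hf : ∀ a b, adj a b → adj' (f a) (f b)) (hw : IsWalk adj k w u v) :
    IsWalk adj' k (f ∘ w) (f u) (f v) :=
  ⟨congrArg f hw.1, congrArg f hw.2.1, fun i hi => hf _ _ (hw.2.2 i hi)⟩

theorem IsWalk.dropLast (hw : IsWalk adj (k + 1) w u v) : IsWalk adj k w u (w k) :=
  ⟨hw.1, rfl, fun i hi => hw.2.2 i (by omega)⟩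

theorem IsWalk.snoc (hw : IsWalk adj k w u v) (hvx : adj v x) :
    IsWalk adj (k + 1) (fun i => if i ≤ k then w i else x) u x := by
  refine ⟨by simp [hw.1], by simp, fun i hi => ?_⟩
  rcases Nat.lt_or_ge i k with hik | hik
  · simpa [hik.le, Nat.succ_le_of_lt hik] using hw.2.2 i hik
  · obtain rfl : i = k := by omega
    simpa [hw.2.1] using hvx

theorem gdist_le_of_isWalk (hw : IsWalk adj k w u v) : gdist adj u v ≤ k :=
  sInf_le ⟨k, w, rfl, hw⟩

theorem exists_isWalk_of_gdist_ne_top (h : gdist adj u v ≠ ⊤) :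
    ∃ k w, IsWalk adj k w u v ∧ (k : ℝ≥0∞) = gdist adj u v := by
  classical
  have hwalk : ∃ k w, IsWalk adj k w u v := by
    by_contra! hnone
    refine h (sInf_eq_top.mpr ?_)
    rintro _ ⟨k, w, -, hw⟩
    exact absurd hw (hnone k w)
  obtain ⟨w, hw⟩ := Nat.find_spec hwalk
  refine ⟨_, w, hw, le_antisymm (le_sInf ?_) (gdist_le_of_isWalk hw)⟩
  rintro _ ⟨k, w', rfl, hw'⟩
  exact_mod_cast Nat.find_min' hwalk ⟨w', hw'⟩

theorem exists_lt_and_not_succ {P : ℕ → Prop} (h0 : P 0) (hk : ¬ P k) :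
    ∃ i < k, P i ∧ ¬ P (i + 1) := by
  by_contra! hstep
  have : ∀ i ≤ k, P i := by
    intro i hi
    induction i with
    | zero => exact h0
    | succ i ih => exact hstep i (by omega) (ih (by omega))
  exact hk (this k le_rfl)

end Walks

def gcthickening {V : Type*} (adj : V → V → Prop) (r : ℝ≥0∞) (H : Set V) : Set V :=
  {x | ∃ h ∈ H, gdist adj x h ≤ r}

section DL

variable {m n : ℕ}

theorem exists_dlAdj_of_treeAdj (x : DLVtx m n) {a : TreeVtx m} (hxa : treeAdj x.a a) :
    ∃ y : DLVtx m n, y.a = a ∧ dlAdj x y := by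
  have hbal := x.bal
  by_cases hup : a.ht = x.a.ht + 1
  · exact ⟨⟨a, x.b.descendant (x.b.ht - 1) (by omega), by simp [TreeVtx.descendant]; omega⟩,
      rfl, hxa, treeAdj_descendant_sub_one x.b⟩
  · have hdown : x.a.ht = a.ht + 1 := by
      rcases hxa with h | h
      · exact absurd h.1 hup
      · exact h.1
    exact ⟨⟨a, x.b.parent, by simp [TreeVtx.parent]; omega⟩, rfl, hxa, treeAdj_parent x.b⟩

theorem exists_isWalk_dlAdj_of_isWalk_treeAdj {k : ℕ} {u : ℕ → TreeVtx m} (x : DLVtx m n)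
    {a : TreeVtx m} (hu : IsWalk treeAdj k u x.a a) :
    ∃ h : DLVtx m n, h.a = a ∧ ∃ W, IsWalk dlAdj k W x h := by
  induction k generalizing a with
  | zero =>
    exact ⟨x, hu.1.symm.trans hu.2.1, fun _ => x, rfl, rfl, fun _ hi => absurd hi (by omega)⟩
  | succ k ih =>
    obtain ⟨h, hha, W, hW⟩ := ih hu.dropLast
    obtain ⟨y, hya, hhy⟩ := exists_dlAdj_of_treeAdj h (hha ▸ hu.2.2 k (by omega))
    exact ⟨y, hya.trans hu.2.1, _, hW.snoc hhy⟩

theorem mem_gcthickening_yHoro_of_a_eq {r : ℝ≥0∞} {v₀ : TreeVtx m} {x x' : DLVtx m n}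
    (hx : x ∈ gcthickening dlAdj r (yHoro v₀)) (hxa : x.a = x'.a) :
    x' ∈ gcthickening dlAdj r (yHoro v₀) := by
  obtain ⟨h, hh, hd⟩ := hx
  by_cases htop : gdist dlAdj x h = ⊤
  · exact ⟨h, hh, by rw [htop, top_le_iff] at hd; simp [hd]⟩
  obtain ⟨k, W, hW, hk⟩ := exists_isWalk_of_gdist_ne_top htop
  have hproj := hW.map DLVtx.a fun _ _ hadj => hadj.1
  rw [hxa, show h.a = v₀ from hh] at hproj
  obtain ⟨h', hh', W', hW'⟩ := exists_isWalk_dlAdj_of_isWalk_treeAdj x' hproj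
  exact ⟨h', hh', (gdist_le_of_isWalk hW').trans (hk ▸ hd)⟩

theorem mem_dlShadow_yHoro_of_ancestor {ρ : ℝ} {v₀ : TreeVtx m} {x z : DLVtx m n}
    (hz : z ∈ gcthickening dlAdj (ENNReal.ofReal ρ) (yHoro v₀)) (hzx : ancestor z.a x.a) :
    x ∈ dlShadow ρ (yHoro v₀) := by
  have hle : -z.a.ht ≤ x.b.ht := by have := x.bal; have := hzx.1; omega
  let z' : DLVtx m n := ⟨z.a, x.b.descendant _ hle, by simp [TreeVtx.descendant]⟩
  exact ⟨z', mem_gcthickening_yHoro_of_a_eq hz rfl, hzx, ancestor_descendant x.b _ hle⟩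

theorem dlBelow_or_dlBelow_of_dlAdj {x y : DLVtx m n} (hxy : dlAdj x y) :
    (y.a.ht = x.a.ht + 1 ∧ dlBelow x y) ∨ dlBelow y x := by
  have := x.bal
  have := y.bal
  rcases treeAdj_iff.mp hxy.1 with ⟨hup, ha⟩ | ⟨hdown, ha⟩
  · rcases treeAdj_iff.mp hxy.2 with ⟨hb_up, -⟩ | ⟨-, hb⟩
    · omega
    · exact .inl ⟨hup, ha, hb⟩
  · rcases treeAdj_iff.mp hxy.2 with ⟨-, hb⟩ | ⟨hb_down, -⟩
    · exact .inr ⟨ha, hb⟩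
    · omega

theorem mem_gcthickening_of_mem_dlShadow_of_dlAdj {ρ : ℝ} {v₀ : TreeVtx m} {x y : DLVtx m n}
    (hx : x ∈ dlShadow ρ (yHoro v₀)) (hy : y ∉ dlShadow ρ (yHoro v₀)) (hxy : dlAdj x y) :
    x ∈ gcthickening dlAdj (ENNReal.ofReal ρ) (yHoro v₀) := by
  obtain ⟨z, hz, hzx, -⟩ := hx
  rcases dlBelow_or_dlBelow_of_dlAdj hxy with ⟨hup, hyx, -⟩ | ⟨hxy, -⟩
  · by_cases hle : z.a.ht ≤ x.a.ht
    · exact mem_gcthickening_yHoro_of_a_eq hz (eq_of_ancestor_of_ht_le hzx hle)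
    · exact absurd (mem_dlShadow_yHoro_of_ancestor hz
        (ancestor_of_ancestor_of_ht_le hzx hyx (by omega))) hy
  · exact absurd (mem_dlShadow_yHoro_of_ancestor hz (ancestor_trans hzx hxy)) hy

end DL

end DLGeo

theorem dl_shadows_disconnect_general
    (n : ℕ) (ρ : ℝ) (v₀ : TreeVtx n)
    (p q : DLVtx n n) (hp : p ∈ dlShadow ρ (yHoro v₀))
    (hq : q ∉ dlShadow ρ (yHoro v₀))
    (k : ℕ) (w : ℕ → DLVtx n n) (hw : IsWalk dlAdj k w p q) :
    ∃ i ≤ k, ∃ h ∈ yHoro (n := n) v₀, gdist dlAdj (w i) h ≤ ENNReal.ofReal ρ := by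
  obtain ⟨i, hik, hi, hi1⟩ :=
    exists_lt_and_not_succ (P := fun i => w i ∈ dlShadow ρ (yHoro v₀)) (hw.1 ▸ hp) (hw.2.1 ▸ hq)
  exact ⟨i, hik.le, mem_gcthickening_of_mem_dlShadow_of_dlAdj hi hi1 (hw.2.2 i hik)⟩

/-- **Lemma (shadows disconnect `DL(n,n)`).**
Suppose `ρ > 1`, `H` is a horocycle in `DL(n,n)`, and `p, q` are two points with
`p ∈ Sh(H,ρ)` and `q ∉ Sh(H,ρ)`.  Then any path connecting `p` to `q` passes within
distance `ρ` of `H`. -/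
theorem dl_shadows_disconnect
    (n : ℕ) (hn : 2 ≤ n) (ρ : ℝ) (hρ : 1 < ρ) (v₀ : TreeVtx n)
    (p q : DLVtx n n) (hp : p ∈ dlShadow ρ (yHoro v₀))
    (hq : q ∉ dlShadow ρ (yHoro v₀))
    (k : ℕ) (w : ℕ → DLVtx n n) (hw : IsWalk dlAdj k w p q) :
    ∃ i ≤ k, ∃ h ∈ yHoro (n := n) v₀, gdist dlAdj (w i) h ≤ ENNReal.ofReal ρ :=
  dl_shadows_disconnect_general n ρ v₀ p q hp hq k w hw
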